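/- Let n ≥ 2 be an integer and let h : ℝⁿ → ℝ be a smooth function with Δh = 0 identically. Then at every point x with ∇h(x) ≠ 0, ‖Hess h(x)‖² − ‖∇‖∇h‖(x)‖² ≥ (1/(n−1))·‖∇‖∇h‖(x)‖², where ‖∇h‖ denotes the function y ↦ ‖∇h(y)‖ (which is differentiable near x since ∇h(x) ≠ 0). -/

import Mathlib

open scoped BigOperators

/-- The Laplacian on Euclidean space `ℝⁿ`: the trace of the Hessian. -/
noncomputable def lap {n : ℕ} (u : EuclideanSpace ℝ (Fin n) → ℝ)
    (x : EuclideanSpace ℝ (Fin n)) : ℝ :=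
  ∑ i : Fin n,
    iteratedFDeriv ℝ 2 u x ![EuclideanSpace.single i (1 : ℝ), EuclideanSpace.single i (1 : ℝ)]

/-- The squared Hilbert–Schmidt norm of the Hessian: the sum of squares of its entries. -/
noncomputable def hessNormSq {n : ℕ} (u : EuclideanSpace ℝ (Fin n) → ℝ)
    (x : EuclideanSpace ℝ (Fin n)) : ℝ :=
  ∑ i : Fin n, ∑ j : Fin n,
    (iteratedFDeriv ℝ 2 u x
      ![EuclideanSpace.single i (1 : ℝ), EuclideanSpace.single j (1 : ℝ)]) ^ 2

/- ### Auxiliary algebraic lemmas -/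

lemma sum_sum_deltaF {n : ℕ} (F : Fin n → Fin n → ℝ) :
    ∑ i : Fin n, ∑ j : Fin n, F i j * (if i = j then (1:ℝ) else 0) = ∑ i, F i i := by
  refine Finset.sum_congr rfl fun i _ => ?_
  rw [Finset.sum_eq_single i]
  · simp
  · intro j _ hj; simp [Ne.symm hj]
  · simp

/-- The purely algebraic refined Kato inequality for symmetric trace-free matrices. -/
lemma kato_alg (n : ℕ) (hn : 2 ≤ n) (M : Fin n → Fin n → ℝ)
    (hsym : ∀ i j, M i j = M j i) (htr : ∑ i, M i i = 0)
    (u : Fin n → ℝ) (hu : ∑ i, u i ^ 2 = 1) :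
    ∑ i, ∑ j, M i j ^ 2 - ∑ i, (∑ j, M i j * u j) ^ 2 ≥
      (1/((n:ℝ)-1)) * ∑ i, (∑ j, M i j * u j) ^ 2 := by
  have hn2 : (2:ℝ) ≤ (n:ℝ) := by exact_mod_cast hn
  have hn1 : (0:ℝ) < (n:ℝ) - 1 := by linarith
  set β : ℝ := 1 / ((n:ℝ) - 1) with hβ
  have hβ1 : β * ((n:ℝ) - 1) = 1 := one_div_mul_cancel (by linarith)
  have hβpos : 0 < β := by positivity
  have hβle : β ≤ 1 := by
    rw [hβ, div_le_one hn1]; linarith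
  set a : Fin n → ℝ := fun i => ∑ j, M i j * u j with ha
  set α : ℝ := ∑ i, a i * u i with hα
  set c : ℝ := α * β with hc
  set w : Fin n → ℝ := fun i => a i - α * u i with hw
  set W : ℝ := ∑ i, w i ^ 2 with hW
  have hWnn : 0 ≤ W := Finset.sum_nonneg fun i _ => sq_nonneg _
  -- basic identities
  have h1 : ∑ i, w i * u i = 0 := by
    have e : ∀ i, w i * u i = a i * u i - α * u i ^ 2 := by
      intro i; simp only [hw]; ring
    rw [Finset.sum_congr rfl fun i _ => e i, Finset.sum_sub_distrib, ← Finset.mul_sum, hu, ← hα]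
    ring
  have h1' : ∑ i, u i * w i = 0 := by
    rw [← h1]; exact Finset.sum_congr rfl fun i _ => mul_comm _ _
  have huu : ∑ i, u i * u i = 1 := by
    rw [← hu]; exact Finset.sum_congr rfl fun i _ => (sq (u i)).symm
  have h2 : ∑ i, a i ^ 2 = α ^ 2 + W := by
    have e : ∀ i, a i ^ 2 = w i ^ 2 + 2 * α * (u i * w i) + α ^ 2 * u i ^ 2 := by
      intro i; simp only [hw]; ring
    rw [Finset.sum_congr rfl fun i _ => e i, Finset.sum_add_distrib, Finset.sum_add_distrib,
      ← Finset.mul_sum, ← Finset.mul_sum, h1', hu]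
    ring
  have haw : ∑ j, a j * w j = W := by
    have e : ∀ j, a j * w j = w j ^ 2 + α * (u j * w j) := by
      intro j; simp only [hw]; ring
    rw [Finset.sum_congr rfl fun j _ => e j, Finset.sum_add_distrib, ← Finset.mul_sum, h1', hW]
    ring
  have hwa : ∑ j, w j * a j = W := by
    rw [← haw]; exact Finset.sum_congr rfl fun j _ => mul_comm _ _
  have hua : ∑ i, u i * a i = α := by
    rw [hα]; exact Finset.sum_congr rfl fun i _ => mul_comm _ _
  have hcol : ∀ j, ∑ i, M i j * u i = a j := by
    intro j
    calc ∑ i, M i j * u i = ∑ i, M j i * u i :=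
          Finset.sum_congr rfl fun i _ => by rw [hsym i j]
      _ = a j := rfl
  -- the comparison matrix
  set R : Fin n → Fin n → ℝ := fun i j =>
    u i * w j + w i * u j + (α + c) * (u i * u j) - c * (if i = j then (1:ℝ) else 0) with hR
  -- ⟨M, R⟩
  have hMR : ∑ i, ∑ j, M i j * R i j = 2 * W + α ^ 2 + α ^ 2 * β := by
    have e : ∀ i j, M i j * R i j =
        M i j * u i * w j + w i * (M i j * u j) + (α + c) * (u i * (M i j * u j))
          - c * (M i j * (if i = j then (1:ℝ) else 0)) := by
      intro i j; simp only [hR]; ring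
    rw [Finset.sum_congr rfl fun i _ => Finset.sum_congr rfl fun j _ => e i j]
    have s1 : ∑ i : Fin n, ∑ j, M i j * u i * w j = W := by
      rw [Finset.sum_comm]
      have : ∀ j, ∑ i, M i j * u i * w j = a j * w j := by
        intro j; rw [← Finset.sum_mul, hcol]
      rw [Finset.sum_congr rfl fun j _ => this j, haw]
    have s2 : ∑ i : Fin n, w i * ∑ j : Fin n, M i j * u j = W := hwa
    have s3 : ∑ i : Fin n, u i * ∑ j : Fin n, M i j * u j = α := hua
    have s4 : ∑ i : Fin n, ∑ j, M i j * (if i = j then (1:ℝ) else 0) = 0 := by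
      rw [sum_sum_deltaF, htr]
    simp only [Finset.sum_add_distrib, Finset.sum_sub_distrib, ← Finset.mul_sum]
    rw [s1, s2, s3, s4]
    simp only [hc]; ring
  -- ⟨R, R⟩
  have hRR : ∑ i, ∑ j, R i j ^ 2 = 2 * W + α ^ 2 + α ^ 2 * β := by
    have e : ∀ i j, R i j ^ 2 =
        u i ^ 2 * w j ^ 2 + w i ^ 2 * u j ^ 2 + (α + c) ^ 2 * (u i ^ 2 * u j ^ 2)
          + c ^ 2 * (((1:ℝ)) * (if i = j then (1:ℝ) else 0))
          + 2 * ((w i * u i) * (w j * u j))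
          + 2 * (α + c) * (u i ^ 2 * (u j * w j))
          + 2 * (α + c) * ((w i * u i) * u j ^ 2)
          - 2 * c * (u i * w j * (if i = j then (1:ℝ) else 0))
          - 2 * c * (w i * u j * (if i = j then (1:ℝ) else 0))
          - 2 * c * (α + c) * ((u i * u j) * (if i = j then (1:ℝ) else 0)) := by
      intro i j; simp only [hR]; split_ifs <;> ring
    rw [Finset.sum_congr rfl fun i _ => Finset.sum_congr rfl fun j _ => e i j]
    have s1 : ∑ x : Fin n, u x ^ 2 * ∑ i : Fin n, w i ^ 2 = W := by
      rw [← Finset.sum_mul, hu, one_mul]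
    have s2 : ∑ x : Fin n, w x ^ 2 * ∑ i : Fin n, u i ^ 2 = W := by
      rw [← Finset.sum_mul, hu, mul_one]
    have s3 : ∑ i : Fin n, u i ^ 2 * ∑ i : Fin n, u i ^ 2 = 1 := by
      rw [← Finset.sum_mul, hu, one_mul]
    have s4 : ∑ i : Fin n, ∑ j : Fin n, (if i = j then (1:ℝ) else 0) = (n:ℝ) := by
      have : ∀ i : Fin n, ∑ j : Fin n, (if i = j then (1:ℝ) else 0) = 1 := by
        intro i; simp
      rw [Finset.sum_congr rfl fun i _ => this i]; simp
    have s5 : ∑ i : Fin n, w i * u i * ∑ i : Fin n, w i * u i = 0 := by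
      rw [← Finset.sum_mul, h1, zero_mul]
    have s6 : ∑ i : Fin n, u i ^ 2 * ∑ i : Fin n, u i * w i = 0 := by
      rw [h1']; simp
    have s7 : ∑ i : Fin n, w i * u i * ∑ i : Fin n, u i ^ 2 = 0 := by
      rw [← Finset.sum_mul, h1, zero_mul]
    have s8 : ∑ i : Fin n, ∑ j, u i * w j * (if i = j then (1:ℝ) else 0) = 0 := by
      rw [sum_sum_deltaF (fun i j => u i * w j), h1']
    have s9 : ∑ i : Fin n, ∑ j, w i * u j * (if i = j then (1:ℝ) else 0) = 0 := by
      rw [sum_sum_deltaF (fun i j => w i * u j), h1]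
    have s10 : ∑ i : Fin n, ∑ j, (u i * u j) * (if i = j then (1:ℝ) else 0) = 1 := by
      rw [sum_sum_deltaF (fun i j => u i * u j), huu]
    simp only [Finset.sum_add_distrib, Finset.sum_sub_distrib, ← Finset.mul_sum]
    rw [s1, s2, s3, s4, s5, s6, s7, s8, s9, s10]
    simp only [hc]
    linear_combination (α^2 * β) * hβ1
  -- positivity of ‖M - R‖²
  have hpos : (0:ℝ) ≤ ∑ i, ∑ j, (M i j - R i j) ^ 2 :=
    Finset.sum_nonneg fun i _ => Finset.sum_nonneg fun j _ => sq_nonneg _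
  have hexp : ∑ i, ∑ j, (M i j - R i j) ^ 2 =
      ∑ i, ∑ j, M i j ^ 2 - 2 * (∑ i, ∑ j, M i j * R i j) + ∑ i, ∑ j, R i j ^ 2 := by
    have e : ∀ i j, (M i j - R i j) ^ 2 = M i j ^ 2 - 2 * (M i j * R i j) + R i j ^ 2 := by
      intro i j; ring
    rw [Finset.sum_congr rfl fun i _ => Finset.sum_congr rfl fun j _ => e i j]
    simp only [Finset.sum_add_distrib, Finset.sum_sub_distrib, ← Finset.mul_sum]
  rw [ge_iff_le]
  rw [hMR, hRR] at hexp
  have hMM : 2 * W + α ^ 2 + α ^ 2 * β ≤ ∑ i, ∑ j, M i j ^ 2 := by nlinarith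
  have e2 : ∑ i, (∑ j, M i j * u j) ^ 2 = α ^ 2 + W := h2
  rw [e2]
  nlinarith [mul_nonneg (sub_nonneg.2 hβle) hWnn]

/- ### Auxiliary analytic lemmas -/

lemma grad_eq {n : ℕ} (h : EuclideanSpace ℝ (Fin n) → ℝ) (y : EuclideanSpace ℝ (Fin n)) :
    gradient h y = (InnerProductSpace.toDual ℝ (EuclideanSpace ℝ (Fin n))).symm (fderiv ℝ h y) :=
  rfl

lemma grad_apply {n : ℕ} (h : EuclideanSpace ℝ (Fin n) → ℝ) (y : EuclideanSpace ℝ (Fin n))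
    (i : Fin n) :
    gradient h y i = fderiv ℝ h y (EuclideanSpace.single i (1:ℝ)) := by
  have : (inner ℝ (gradient h y) (EuclideanSpace.single i (1:ℝ)) : ℝ)
      = fderiv ℝ h y (EuclideanSpace.single i (1:ℝ)) := by
    rw [grad_eq]; exact InnerProductSpace.toDual_symm_apply
  rw [← this, EuclideanSpace.inner_single_right]
  simp

lemma norm_sq_eq_sum {n : ℕ} (v : EuclideanSpace ℝ (Fin n)) : ‖v‖ ^ 2 = ∑ i, v i ^ 2 := by
  rw [EuclideanSpace.norm_eq, Real.sq_sqrt (by positivity)]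
  exact Finset.sum_congr rfl fun i _ => by rw [Real.norm_eq_abs, sq_abs]

lemma grad_diffAt {n : ℕ} (h : EuclideanSpace ℝ (Fin n) → ℝ) (hh : ContDiff ℝ (⊤ : ℕ∞) h)
    (x : EuclideanSpace ℝ (Fin n)) : DifferentiableAt ℝ (gradient h) x := by
  have hdf : Differentiable ℝ (fderiv ℝ h) :=
    (hh.fderiv_right (m := 1) (WithTop.coe_le_coe.2 le_top)).differentiable one_ne_zero
  refine differentiableAt_euclidean.2 fun i => ?_
  have : (fun y => gradient h y i)
      = fun y => (ContinuousLinearMap.apply ℝ ℝ (EuclideanSpace.single i (1:ℝ)))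
          (fderiv ℝ h y) := by
    funext y; rw [grad_apply]; rfl
  rw [this]
  exact (ContinuousLinearMap.apply ℝ ℝ _).differentiable.differentiableAt.comp x (hdf x)

/-- The derivative of the gradient pairs with vectors as the second derivative. -/
lemma bridge {n : ℕ} (h : EuclideanSpace ℝ (Fin n) → ℝ) (hh : ContDiff ℝ (⊤ : ℕ∞) h)
    (x : EuclideanSpace ℝ (Fin n)) (v w : EuclideanSpace ℝ (Fin n)) :
    (inner ℝ (fderiv ℝ (gradient h) x v) w : ℝ) = fderiv ℝ (fderiv ℝ h) x v w := by
  have hdf : Differentiable ℝ (fderiv ℝ h) :=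
    (hh.fderiv_right (m := 1) (WithTop.coe_le_coe.2 le_top)).differentiable one_ne_zero
  have hH : HasFDerivAt (gradient h) (fderiv ℝ (gradient h) x) x :=
    (grad_diffAt h hh x).hasFDerivAt
  have hA : HasFDerivAt (fderiv ℝ h) (fderiv ℝ (fderiv ℝ h) x) x := (hdf x).hasFDerivAt
  have h1 : HasFDerivAt (fun y => (innerSL ℝ w) (gradient h y))
      ((innerSL ℝ w).comp (fderiv ℝ (gradient h) x)) x :=
    (innerSL ℝ w).hasFDerivAt.comp x hH
  have h2 : HasFDerivAt (fun y => fderiv ℝ h y w)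
      ((ContinuousLinearMap.apply ℝ ℝ w).comp (fderiv ℝ (fderiv ℝ h) x)) x :=
    (ContinuousLinearMap.apply ℝ ℝ w).hasFDerivAt.comp x hA
  have heq : (fun y => (innerSL ℝ w) (gradient h y)) = fun y => fderiv ℝ h y w := by
    funext y
    show (inner ℝ w (gradient h y) : ℝ) = fderiv ℝ h y w
    rw [real_inner_comm, grad_eq]
    exact InnerProductSpace.toDual_symm_apply
  rw [heq] at h1
  have hu := h1.unique h2
  have : ((innerSL ℝ w).comp (fderiv ℝ (gradient h) x)) v
      = ((ContinuousLinearMap.apply ℝ ℝ w).comp (fderiv ℝ (fderiv ℝ h) x)) v := by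
    rw [hu]
  rw [real_inner_comm]
  simpa [mul_comm] using this

/-- The refined Kato inequality (Lemma 2) in the flat Euclidean case: for a smooth
harmonic function `h` and a point `x` with `∇h(x) ≠ 0`,
`‖Hess h‖² − ‖∇‖∇h‖‖² ≥ (1/(n−1)) ‖∇‖∇h‖‖²`. -/
theorem stmt_13 (n : ℕ) (hn : 2 ≤ n) (h : EuclideanSpace ℝ (Fin n) → ℝ)
    (hh : ContDiff ℝ (⊤ : ℕ∞) h) (hharm : ∀ x, lap h x = 0)
    (x : EuclideanSpace ℝ (Fin n)) (hx : gradient h x ≠ 0) :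
    hessNormSq h x - ‖gradient (fun y => ‖gradient h y‖) x‖ ^ 2 ≥
      (1 / ((n : ℝ) - 1)) * ‖gradient (fun y => ‖gradient h y‖) x‖ ^ 2 := by
  set g := gradient h x with hgdef
  set H := fderiv ℝ (gradient h) x with hHdef
  set A := fderiv ℝ (fderiv ℝ h) x with hAdef
  have hdf : Differentiable ℝ (fderiv ℝ h) :=
    (hh.fderiv_right (m := 1) (WithTop.coe_le_coe.2 le_top)).differentiable one_ne_zero
  have hA : HasFDerivAt (fderiv ℝ h) A x := (hdf x).hasFDerivAt
  have hH : HasFDerivAt (gradient h) H x := (grad_diffAt h hh x).hasFDerivAt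
  -- the Hessian entries
  set M : Fin n → Fin n → ℝ := fun i j =>
    A (EuclideanSpace.single i (1:ℝ)) (EuclideanSpace.single j (1:ℝ)) with hM
  have hMentry : ∀ i j, iteratedFDeriv ℝ 2 h x
      ![EuclideanSpace.single i (1:ℝ), EuclideanSpace.single j (1:ℝ)] = M i j := by
    intro i j
    rw [iteratedFDeriv_two_apply]
    simp [hM]
    rfl
  have hsymA : ∀ v w, A v w = A w v :=
    second_derivative_symmetric (fun y => (hh.differentiable (by simp) y).hasFDerivAt) hA
  have hsym : ∀ i j, M i j = M j i := fun i j => hsymA _ _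
  have htr : ∑ i, M i i = 0 := by
    have := hharm x
    rw [lap] at this
    rw [← this]
    exact Finset.sum_congr rfl fun i _ => (hMentry i i).symm
  -- the bridge
  have hHA : ∀ v w, (inner ℝ (H v) w : ℝ) = A v w := fun v w => bridge h hh x v w
  have hHi : ∀ i j, H (EuclideanSpace.single i (1:ℝ)) j = M i j := by
    intro i j
    have h1 : (inner ℝ (H (EuclideanSpace.single i (1:ℝ))) (EuclideanSpace.single j (1:ℝ)) : ℝ)
        = M i j := hHA _ _
    rw [EuclideanSpace.inner_single_right] at h1
    simpa using h1
  -- gradient of the norm of the gradient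
  have hgn : ‖g‖ ≠ 0 := norm_ne_zero_iff.2 hx
  have hsq : HasFDerivAt (fun y => ‖gradient h y‖ ^ 2) (2 • (innerSL ℝ g).comp H) x :=
    hH.norm_sq
  have hsqrt : HasDerivAt Real.sqrt (1/(2*Real.sqrt (‖g‖^2))) (‖g‖^2) :=
    Real.hasDerivAt_sqrt (pow_ne_zero 2 hgn)
  have hcomp : HasFDerivAt (Real.sqrt ∘ fun y => ‖gradient h y‖ ^ 2)
      ((1/(2*Real.sqrt (‖g‖^2))) • (2 • (innerSL ℝ g).comp H)) x :=
    hsqrt.comp_hasFDerivAt x hsq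
  have hfun : (Real.sqrt ∘ fun y => ‖gradient h y‖ ^ 2) = fun y => ‖gradient h y‖ :=
    funext fun y => Real.sqrt_sq (norm_nonneg _)
  rw [hfun] at hcomp
  set u : Fin n → ℝ := fun j => g j * ‖g‖⁻¹ with hu'
  have hfi : ∀ i, gradient (fun y => ‖gradient h y‖) x i = ∑ j, M i j * u j := by
    intro i
    have e1 : gradient (fun y => ‖gradient h y‖) x i
        = ‖g‖⁻¹ * (inner ℝ g (H (EuclideanSpace.single i (1:ℝ))) : ℝ) := by
      rw [grad_apply, hcomp.fderiv]
      simp [Real.sqrt_sq (norm_nonneg g)]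
      field_simp
    have e2 : (inner ℝ g (H (EuclideanSpace.single i (1:ℝ))) : ℝ) = ∑ j, M i j * g j := by
      rw [real_inner_comm]
      rw [PiLp.inner_apply]
      refine Finset.sum_congr rfl fun j _ => ?_
      rw [hHi i j]
      simp [mul_comm]
    rw [e1, e2, Finset.mul_sum]
    refine Finset.sum_congr rfl fun j _ => ?_
    simp only [hu']
    ring
  have hu : ∑ j, u j ^ 2 = 1 := by
    have : ∑ j, u j ^ 2 = (∑ j, g j ^ 2) * (‖g‖⁻¹)^2 := by
      rw [Finset.sum_mul]
      exact Finset.sum_congr rfl fun j _ => by simp only [hu']; ring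
    rw [this, ← norm_sq_eq_sum]
    field_simp
  -- assemble
  have hhn : hessNormSq h x = ∑ i, ∑ j, M i j ^ 2 := by
    rw [hessNormSq]
    exact Finset.sum_congr rfl fun i _ => Finset.sum_congr rfl fun j _ => by
      rw [hMentry i j]
  have hgradn : ‖gradient (fun y => ‖gradient h y‖) x‖ ^ 2
      = ∑ i, (∑ j, M i j * u j) ^ 2 := by
    rw [norm_sq_eq_sum]
    exact Finset.sum_congr rfl fun i _ => by rw [hfi i]
  rw [hhn, hgradn]
  exact kato_alg n hn M hsym htr u hu
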